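/- arXiv:0904.3842 — 9 statements merged into one kernel-verified Lean document; each statement's English description precedes it below -/
import Mathlib

section
/- Let (Ω, 𝓕, P) be a probability space, X : Ω → ℝᵖ an integrable random vector, Y : Ω → ℝ a measurable random variable, and β a real p×d matrix. If Y and X are conditionally independent given σ(βᵀX), then E[X | σ(Y)] = E[ E[X | σ(βᵀX)] | σ(Y) ] P-almost everywhere. (Theorem 2.1, part 1: the central space S_{Y|X} is a solution space of the inverse regression equation E(X|Y) = E[E(X|βᵀX)|Y].) -/
/-!
Let `m' = σ(βᵀX)`. For `A ∈ σ(Y)` and `B ∈ σ(X)`, conditional independence gives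
`∫_A E[1_B | m'] = ∫ E[1_A | m'] E[1_B | m'] = ∫ E[1_{A ∩ B} | m'] = P(A ∩ B) = ∫_A 1_B`.
By linearity and L¹-continuity of `g ↦ ∫_A E[g | m']`, this extends from indicators to every
integrable `σ(X)`-measurable `g`, in particular to `g = X`. So `E[X | m']` and `X` have the same
integrals over every event of `σ(Y)`, hence the same conditional expectation given `σ(Y)`.
-/

open MeasureTheory ProbabilityTheory

namespace MeasureTheory

variable {Ω : Type*} {m mΩ : MeasurableSpace Ω} {μ : Measure Ω} [IsFiniteMeasure μ] {s : Set Ω}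

theorem setIntegral_eq_integral_condExp_indicator_mul (hm : m ≤ mΩ) (hs : MeasurableSet s)
    {g : Ω → ℝ} (hgm : AEStronglyMeasurable[m] g μ) (hg : Integrable g μ) :
    ∫ x in s, g x ∂μ = ∫ x, (μ⟦s|m⟧) x * g x ∂μ := by
  have hind : s.indicator g = s.indicator (fun _ => (1 : ℝ)) * g := by
    ext x; by_cases hx : x ∈ s <;> simp [hx]
  calc ∫ x in s, g x ∂μ = ∫ x, (s.indicator (fun _ => (1 : ℝ)) * g) x ∂μ := by
        rw [← integral_indicator hs, hind]
    _ = ∫ x, μ[s.indicator (fun _ => (1 : ℝ)) * g|m] x ∂μ := (integral_condExp hm).symm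
    _ = ∫ x, (μ⟦s|m⟧) x * g x ∂μ :=
        integral_congr_ae (condExp_mul_of_aestronglyMeasurable_right hgm
          (hind ▸ hg.indicator hs) ((integrable_const 1).indicator hs))

end MeasureTheory

namespace ProbabilityTheory

variable {Ω E : Type*} [NormedAddCommGroup E] [NormedSpace ℝ E] [CompleteSpace E]
  {m' m₁ m₂ mΩ : MeasurableSpace Ω} [StandardBorelSpace Ω] {hm' : m' ≤ mΩ}
  {μ : Measure Ω} [IsFiniteMeasure μ] {s t : Set Ω}

theorem CondIndep.setIntegral_condExp_indicator (hm₁ : m₁ ≤ mΩ) (hm₂ : m₂ ≤ mΩ)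
    (h : CondIndep m' m₁ m₂ hm' μ) (hs : MeasurableSet[m₁] s) (ht : MeasurableSet[m₂] t) :
    ∫ x in s, (μ⟦t|m'⟧) x ∂μ = μ.real (s ∩ t) := by
  calc ∫ x in s, (μ⟦t|m'⟧) x ∂μ = ∫ x, ((μ⟦s|m'⟧) * (μ⟦t|m'⟧)) x ∂μ :=
        setIntegral_eq_integral_condExp_indicator_mul hm' (hm₁ s hs)
          stronglyMeasurable_condExp.aestronglyMeasurable integrable_condExp
    _ = ∫ x, (μ⟦s ∩ t|m'⟧) x ∂μ :=
        integral_congr_ae ((condIndep_iff _ _ _ hm' hm₁ hm₂ μ).1 h s t hs ht).symm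
    _ = μ.real (s ∩ t) := by
        rw [integral_condExp hm', integral_indicator_const _ ((hm₁ s hs).inter (hm₂ t ht)),
          smul_eq_mul, mul_one]

theorem CondIndep.setIntegral_condExp (hm₁ : m₁ ≤ mΩ) (hm₂ : m₂ ≤ mΩ)
    (h : CondIndep m' m₁ m₂ hm' μ) (hs : MeasurableSet[m₁] s) {f : Ω → E}
    (hfm : AEStronglyMeasurable[m₂] f μ) (hf : Integrable f μ) :
    ∫ x in s, μ[f|m'] x ∂μ = ∫ x in s, f x ∂μ := by
  rw [← memLp_one_iff_integrable] at hf
  refine MemLp.induction_stronglyMeasurable hm₂ ENNReal.one_ne_top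
    (fun f => ∫ x in s, μ[f|m'] x ∂μ = ∫ x in s, f x ∂μ) ?_ ?_ ?_ ?_ hf hfm
  · intro c t ht _
    have hind : t.indicator (fun _ => c) = t.indicator (1 : Ω → ℝ) • fun _ => c := by
      ext x; by_cases hx : x ∈ t <;> simp [hx]
    calc ∫ x in s, μ[t.indicator (fun _ => c)|m'] x ∂μ = ∫ x in s, (μ⟦t|m'⟧) x • c ∂μ := by
          rw [hind]
          exact integral_congr_ae (ae_restrict_of_ae (condExp_smul_of_aestronglyMeasurable_right
            ((integrable_const 1).indicator (hm₂ t ht)) (hind ▸ (integrable_const c).indicator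
            (hm₂ t ht)) aestronglyMeasurable_const))
      _ = μ.real (s ∩ t) • c := by
          rw [integral_smul_const, h.setIntegral_condExp_indicator hm₁ hm₂ hs ht]
      _ = ∫ x in s, t.indicator (fun _ => c) x ∂μ := by
          rw [integral_indicator_const _ (hm₂ t ht), measureReal_restrict_apply (hm₂ t ht),
            Set.inter_comm]
  · intro u v _ hu hv _ _ hu_eq hv_eq
    rw [memLp_one_iff_integrable] at hu hv
    rw [integral_congr_ae (ae_restrict_of_ae (condExp_add hu hv m'))]
    simp only [Pi.add_apply]
    rw [integral_add integrable_condExp.integrableOn integrable_condExp.integrableOn,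
      integral_add hu.integrableOn hv.integrableOn, hu_eq, hv_eq]
  · have hcond (f : Ω →₁[μ] E) :
        ∫ x in s, μ[⇑f|m'] x ∂μ = ∫ x in s, condExpL1CLM E hm' μ f x ∂μ := by
      have h := condExp_ae_eq_condExpL1CLM hm' (L1.integrable_coeFn f)
      rw [Integrable.toL1_coeFn] at h
      exact integral_congr_ae (ae_restrict_of_ae h)
    simp_rw [hcond]
    exact isClosed_eq ((continuous_setIntegral s).comp
      ((condExpL1CLM E hm' μ).continuous.comp continuous_subtype_val))
      ((continuous_setIntegral s).comp continuous_subtype_val)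
  · intro u v huv _ hu
    rwa [← integral_congr_ae (ae_restrict_of_ae huv),
      ← integral_congr_ae (ae_restrict_of_ae (condExp_congr_ae huv))]

theorem CondIndep.condExp_condExp_eq (hm₁ : m₁ ≤ mΩ) (hm₂ : m₂ ≤ mΩ)
    (h : CondIndep m' m₁ m₂ hm' μ) {f : Ω → E} (hfm : AEStronglyMeasurable[m₂] f μ)
    (hf : Integrable f μ) :
    μ[f|m₁] =ᵐ[μ] μ[μ[f|m']|m₁] := by
  refine (ae_eq_condExp_of_forall_setIntegral_eq hm₁ hf
    (fun _ _ _ => integrable_condExp.integrableOn) (fun s hs _ => ?_)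
    stronglyMeasurable_condExp.aestronglyMeasurable).symm
  rw [MeasureTheory.setIntegral_condExp hm₁ integrable_condExp hs,
    h.setIntegral_condExp hm₁ hm₂ hs hfm hf]

end ProbabilityTheory

/-- Theorem 2.1, part 1 (key step): if `Y ⟂⟂ X | σ(βᵀX)`, then
`E[X | σ(Y)] = E[ E[X | σ(βᵀX)] | σ(Y) ]` almost everywhere, i.e. the central space is a
solution space of the inverse regression equation. -/
theorem stmt_0 {Ω : Type*} [MeasurableSpace Ω] [StandardBorelSpace Ω]
    (μ : Measure Ω) [IsProbabilityMeasure μ]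
    {p d : ℕ} (X : Ω → (Fin p → ℝ)) (Y : Ω → ℝ)
    (β : Matrix (Fin p) (Fin d) ℝ)
    (hX : Measurable X) (hY : Measurable Y)
    (hβX : Measurable fun ω => β.transpose.mulVec (X ω))
    (hXint : Integrable X μ)
    (hci : CondIndepFun
      (MeasurableSpace.comap (fun ω => β.transpose.mulVec (X ω)) inferInstance)
      hβX.comap_le Y X μ) :
    μ[X | MeasurableSpace.comap Y inferInstance] =ᵐ[μ]
      μ[ μ[X | MeasurableSpace.comap (fun ω => β.transpose.mulVec (X ω)) inferInstance]
         | MeasurableSpace.comap Y inferInstance] := by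
  rw [condIndepFun_iff_condIndep] at hci
  exact hci.condExp_condExp_eq hY.comap_le hX.comap_le
    (comap_measurable X).stronglyMeasurable.aestronglyMeasurable hXint
end

section
/- Let X : Ω → ℝᵖ be a square-integrable random vector with E[X] = 0 and positive definite covariance matrix Σ = E[XXᵀ], and let β be a real p×d matrix such that βᵀΣβ is invertible. If there exists a p×d real matrix C such that E[X | σ(βᵀX)] = C(βᵀX) P-almost everywhere, then C = Σβ(βᵀΣβ)⁻¹; consequently E[X | σ(βᵀX)] = P_β(Σ)ᵀ X P-almost everywhere. (The linear conditional mean condition (1) implies E(X|βᵀX) = Pᵀ(Σ)X, as used in the proof of Theorem 2.1.) -/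
/-!
Testing the linear conditional mean against the `σ(βᵀX)`-measurable coordinates of `Y = βᵀX`
(pull-out property of conditional expectation) yields the normal equations
`E[X Yᵀ] = C E[Y Yᵀ]`, i.e. `Σβ = C (βᵀΣβ)`. Invertibility of `βᵀΣβ` pins down `C`, and since `Σ`
is symmetric, `C βᵀ = Σβ(βᵀΣβ)⁻¹βᵀ` is exactly `P_β(Σ)ᵀ`.
-/

open MeasureTheory Matrix

section ConditionalExpectation

variable {Ω : Type*} {m mΩ : MeasurableSpace Ω} {μ : Measure Ω}

lemma integral_mul_eq_integral_condExp_mul (hm : m ≤ mΩ) [SigmaFinite (μ.trim hm)]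
    {f g : Ω → ℝ} (hg : AEStronglyMeasurable[m] g μ) (hfg : Integrable (f * g) μ)
    (hf : Integrable f μ) :
    ∫ ω, f ω * g ω ∂μ = ∫ ω, μ[f | m] ω * g ω ∂μ :=
  calc ∫ ω, f ω * g ω ∂μ = ∫ ω, μ[f * g | m] ω ∂μ := (integral_condExp hm).symm
    _ = _ := integral_congr_ae (condExp_mul_of_aestronglyMeasurable_right hg hfg hf)

lemma condExp_eval_ae_eq {ι : Type*} [Fintype ι] {X : Ω → ι → ℝ} (hX : Integrable X μ)
    (i : ι) : μ[fun ω => X ω i | m] =ᵐ[μ] fun ω => μ[X | m] ω i :=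
  ((ContinuousLinearMap.proj (R := ℝ) (φ := fun _ : ι => ℝ) i).comp_condExp_comm hX).symm

lemma integral_mul_eq_of_condExp_ae_eq_mulVec [IsFiniteMeasure μ] (hm : m ≤ mΩ)
    {ι κ : Type*} [Fintype ι] [Fintype κ] {X : Ω → ι → ℝ} {Y : Ω → κ → ℝ}
    (hX : MemLp X 2 μ) (hY : MemLp Y 2 μ) (hYm : Measurable[m] Y) (C : Matrix ι κ ℝ)
    (hC : μ[X | m] =ᵐ[μ] fun ω => C *ᵥ Y ω) (i : ι) (j : κ) :
    ∫ ω, X ω i * Y ω j ∂μ = ∫ ω, (C *ᵥ Y ω) i * Y ω j ∂μ :=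
  calc ∫ ω, X ω i * Y ω j ∂μ = ∫ ω, μ[fun ω => X ω i | m] ω * Y ω j ∂μ :=
        integral_mul_eq_integral_condExp_mul hm
          ((measurable_pi_apply j).comp hYm).aestronglyMeasurable
          ((hX.eval i).integrable_mul (hY.eval j)) ((hX.eval i).integrable one_le_two)
    _ = ∫ ω, (C *ᵥ Y ω) i * Y ω j ∂μ := by
        refine integral_congr_ae ?_
        filter_upwards [condExp_eval_ae_eq (hX.integrable one_le_two) i, hC] with ω hi hω
        rw [hi, hω]

end ConditionalExpectation

section Moments

variable {Ω : Type*} [MeasurableSpace Ω] {μ : Measure Ω} {ι κ κ' : Type*} [Fintype ι]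
  {X : Ω → ι → ℝ}

lemma MeasureTheory.MemLp.mulVec [Fintype κ] {p : ENNReal} (hX : MemLp X p μ) (A : Matrix κ ι ℝ) :
    MemLp (fun ω => A *ᵥ X ω) p μ :=
  (LinearMap.toContinuousLinearMap A.mulVecLin).comp_memLp' hX

lemma integral_mulVec_mul_mulVec (hX : MemLp X 2 μ) {Sig : Matrix ι ι ℝ}
    (hSig : ∀ i j, Sig i j = ∫ ω, X ω i * X ω j ∂μ) (A : Matrix κ ι ℝ) (B : Matrix κ' ι ℝ)
    (k : κ) (l : κ') :
    ∫ ω, (A *ᵥ X ω) k * (B *ᵥ X ω) l ∂μ = (A * Sig * Bᵀ) k l := by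
  have hXX : ∀ i j, Integrable (fun ω => X ω i * X ω j) μ := fun i j =>
    (hX.eval i).integrable_mul (hX.eval j)
  have hexp : ∀ ω, (A *ᵥ X ω) k * (B *ᵥ X ω) l
      = ∑ i, ∑ j, A k i * B l j * (X ω i * X ω j) := fun ω => by
    simp only [mulVec, dotProduct, Finset.sum_mul_sum]
    exact Finset.sum_congr rfl fun i _ => Finset.sum_congr rfl fun j _ => by ring
  simp_rw [hexp]
  rw [integral_finsetSum _ fun i _ => integrable_finsetSum _ fun j _ => (hXX i j).const_mul _]
  simp_rw [integral_finsetSum _ fun j _ => (hXX _ j).const_mul _, integral_const_mul, ← hSig,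
    mul_apply, transpose_apply, Finset.sum_mul]
  rw [Finset.sum_comm]
  exact Finset.sum_congr rfl fun i _ => Finset.sum_congr rfl fun j _ => by ring

end Moments

lemma Matrix.isSymm_of_eq_integral_mul {Ω ι : Type*} [MeasurableSpace Ω] {μ : Measure Ω}
    {X : Ω → ι → ℝ} {Sig : Matrix ι ι ℝ} (hSig : ∀ i j, Sig i j = ∫ ω, X ω i * X ω j ∂μ) :
    Sig.IsSymm := by
  ext i j
  simp only [transpose_apply, hSig, mul_comm]

lemma Matrix.IsSymm.transpose_projection {R ι κ : Type*} [CommRing R] [Fintype ι] [Fintype κ]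
    [DecidableEq κ] {Sig : Matrix ι ι R} (hSig : Sig.IsSymm) (β : Matrix ι κ R) :
    (β * (βᵀ * Sig * β)⁻¹ * βᵀ * Sig)ᵀ = Sig * β * (βᵀ * Sig * β)⁻¹ * βᵀ := by
  simp only [transpose_mul, transpose_nonsing_inv, hSig.eq, transpose_transpose,
    Matrix.mul_assoc]

theorem stmt_1_general {Ω : Type*} [MeasurableSpace Ω]
    (μ : Measure Ω) [IsProbabilityMeasure μ]
    {p d : ℕ} (X : Ω → (Fin p → ℝ)) (hX : Measurable X)
    (hX2 : MemLp X 2 μ)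
    (Sig : Matrix (Fin p) (Fin p) ℝ)
    (hSig : ∀ i j, Sig i j = ∫ ω, X ω i * X ω j ∂μ)
    (β : Matrix (Fin p) (Fin d) ℝ)
    (hβ : IsUnit (β.transpose * Sig * β).det)
    (C : Matrix (Fin p) (Fin d) ℝ)
    (hC : μ[X | MeasurableSpace.comap (fun ω => β.transpose.mulVec (X ω)) inferInstance]
      =ᵐ[μ] fun ω => C.mulVec (β.transpose.mulVec (X ω))) :
    C = Sig * β * (β.transpose * Sig * β)⁻¹ ∧
    μ[X | MeasurableSpace.comap (fun ω => β.transpose.mulVec (X ω)) inferInstance]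
      =ᵐ[μ] fun ω =>
        (β * (β.transpose * Sig * β)⁻¹ * β.transpose * Sig).transpose.mulVec (X ω) := by
  have hY : Measurable fun ω => βᵀ *ᵥ X ω :=
    βᵀ.mulVecLin.continuous_of_finiteDimensional.measurable.comp hX
  have hnormal : Sig * β = C * (βᵀ * Sig * β) := by
    ext i j
    have h := integral_mul_eq_of_condExp_ae_eq_mulVec hY.comap_le hX2 (hX2.mulVec βᵀ)
      (comap_measurable _) C hC i j
    have hXY := integral_mulVec_mul_mulVec hX2 hSig 1 βᵀ i j
    have hCYY := integral_mulVec_mul_mulVec hX2 hSig (C * βᵀ) βᵀ i j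
    simp only [one_mulVec, one_mul, transpose_transpose] at hXY
    simp only [mulVec_mulVec, transpose_transpose] at h hCYY
    rw [← hXY, h, hCYY, Matrix.mul_assoc, Matrix.mul_assoc, Matrix.mul_assoc]
  have hCeq : C = Sig * β * (βᵀ * Sig * β)⁻¹ := by
    rw [hnormal, mul_nonsing_inv_cancel_right _ _ hβ]
  refine ⟨hCeq, hC.trans (Filter.Eventually.of_forall fun ω => ?_)⟩
  rw [(Matrix.isSymm_of_eq_integral_mul hSig).transpose_projection, hCeq]
  exact mulVec_mulVec _ _ _

/-- If the linear conditional mean condition holds, i.e. `E[X | σ(βᵀX)] = C (βᵀX)` a.e. for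
some matrix `C`, then necessarily `C = Σβ(βᵀΣβ)⁻¹`, so that
`E[X | σ(βᵀX)] = P_β(Σ)ᵀ X` a.e., where `P_β(Σ) = β(βᵀΣβ)⁻¹βᵀΣ`. -/
theorem stmt_1 {Ω : Type*} [MeasurableSpace Ω]
    (μ : Measure Ω) [IsProbabilityMeasure μ]
    {p d : ℕ} (X : Ω → (Fin p → ℝ)) (hX : Measurable X)
    (hX2 : MemLp X 2 μ) (hmean : ∫ ω, X ω ∂μ = 0)
    (Sig : Matrix (Fin p) (Fin p) ℝ)
    (hSig : ∀ i j, Sig i j = ∫ ω, X ω i * X ω j ∂μ)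
    (hSigpd : Sig.PosDef)
    (β : Matrix (Fin p) (Fin d) ℝ)
    (hβ : IsUnit (β.transpose * Sig * β).det)
    (C : Matrix (Fin p) (Fin d) ℝ)
    (hC : μ[X | MeasurableSpace.comap (fun ω => β.transpose.mulVec (X ω)) inferInstance]
      =ᵐ[μ] fun ω => C.mulVec (β.transpose.mulVec (X ω))) :
    C = Sig * β * (β.transpose * Sig * β)⁻¹ ∧
    μ[X | MeasurableSpace.comap (fun ω => β.transpose.mulVec (X ω)) inferInstance]
      =ᵐ[μ] fun ω =>
        (β * (β.transpose * Sig * β)⁻¹ * β.transpose * Sig).transpose.mulVec (X ω) :=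
  stmt_1_general μ X hX hX2 Sig hSig β hβ C hC
end

section
/- Let X : Ω → ℝᵖ be a square-integrable random vector with E[X] = 0 and positive definite covariance matrix Σ = E[XXᵀ], Y : Ω → ℝ measurable, and η a real p×d matrix with ηᵀΣη invertible. Assume (i) E[X | σ(ηᵀX)] = P_η(Σ)ᵀ X P-almost everywhere, and (ii) η solves the inverse regression equation: E[X | σ(Y)] = E[ E[X | σ(ηᵀX)] | σ(Y) ] P-almost everywhere. Then Σ⁻¹E[X | σ(Y)] = P_η(Σ) Σ⁻¹E[X | σ(Y)] P-almost everywhere; in particular, Σ⁻¹E[X|σ(Y)](ω) lies in span(η) for P-almost every ω, and the column space of the inverse regression matrix A_IR = Σ⁻¹E[ZZᵀ]Σ⁻¹, where Z = E[X|σ(Y)], is contained in span(η). (Theorem 2.1, part 2: the inclusion S_IR ⊆ S_CSS.) -/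
/-!
Write `P = P_η(Σ)`. The linear conditional mean says `E[X | ηᵀX] = Pᵀ X`, so by the inverse
regression equation and linearity of conditional expectation `Z = E[X | Y]` satisfies
`Z = E[Pᵀ X | Y] = Pᵀ Z`. Since `P` is self-adjoint for `⟨a, b⟩ = aᵀΣb`, we have
`Σ⁻¹ Pᵀ = P Σ⁻¹`, hence `Σ⁻¹ Z = P Σ⁻¹ Z ∈ span(η)`. Integrating against `Zᵀ` gives
`Σ⁻¹ E[ZZᵀ] = P Σ⁻¹ E[ZZᵀ]`, so `A_IR = P A_IR` and its column space lies in `span(η)`.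
-/

open MeasureTheory ProbabilityTheory Matrix

namespace Matrix

theorem range_mulVecLin_mul_le {R : Type*} [CommRing R] {l m n : Type*} [Fintype m] [Fintype n]
    (A : Matrix l m R) (B : Matrix m n R) :
    LinearMap.range (A * B).mulVecLin ≤ LinearMap.range A.mulVecLin := by
  rw [mulVecLin_mul]
  exact LinearMap.range_comp_le_range _ _

section colSpanProj

variable {R : Type*} [CommRing R] {n d : Type*} [Fintype n] [Fintype d] [DecidableEq d]

/-- `P_η(Σ)` -/
noncomputable def colSpanProj (Sig : Matrix n n R) (η : Matrix n d R) : Matrix n n R :=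
  η * (ηᵀ * Sig * η)⁻¹ * ηᵀ * Sig

theorem range_mulVecLin_colSpanProj_le (Sig : Matrix n n R) (η : Matrix n d R) :
    LinearMap.range (colSpanProj Sig η).mulVecLin ≤ LinearMap.range η.mulVecLin := by
  have h : colSpanProj Sig η = η * ((ηᵀ * Sig * η)⁻¹ * ηᵀ * Sig) := by
    simp only [colSpanProj, Matrix.mul_assoc]
  rw [h]
  exact range_mulVecLin_mul_le _ _

theorem inv_mul_transpose_colSpanProj [DecidableEq n] {Sig : Matrix n n R} (hSig : Sig.IsSymm)
    (hdet : IsUnit Sig.det) (η : Matrix n d R) :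
    Sig⁻¹ * (colSpanProj Sig η)ᵀ = colSpanProj Sig η * Sig⁻¹ := by
  have hB : ((ηᵀ * Sig * η)⁻¹)ᵀ = (ηᵀ * Sig * η)⁻¹ :=
    (show (ηᵀ * Sig * η).IsSymm by
      simp [IsSymm, transpose_mul, hSig.eq, Matrix.mul_assoc]).inv
  simp only [colSpanProj, transpose_mul, transpose_transpose, hB, hSig.eq, ← Matrix.mul_assoc,
    nonsing_inv_mul Sig hdet, Matrix.one_mul]
  simp only [Matrix.mul_assoc, mul_nonsing_inv Sig hdet, Matrix.mul_one]

end colSpanProj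

theorem mulVec_condExp {Ω : Type*} {m m₀ : MeasurableSpace Ω} {μ : Measure Ω} {k n : Type*}
    [Fintype k] [Fintype n] (A : Matrix k n ℝ) {f : Ω → n → ℝ} (hf : Integrable f μ) :
    (fun ω => A *ᵥ μ[f|m] ω) =ᵐ[μ] μ[fun ω => A *ᵥ f ω|m] :=
  (LinearMap.toContinuousLinearMap A.mulVecLin).comp_condExp_comm hf

end Matrix

section SecondMoment

variable {Ω : Type*} [MeasurableSpace Ω] {μ : Measure Ω} {ι κ : Type*} [Fintype ι]
  {Z : Ω → ι → ℝ}

noncomputable def secondMoment (μ : Measure Ω) (Z : Ω → ι → ℝ) : Matrix ι ι ℝ :=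
  Matrix.of fun i j => ∫ ω, Z ω i * Z ω j ∂μ

theorem mul_secondMoment_apply (hZ : MemLp Z 2 μ) (A : Matrix κ ι ℝ) (i : κ) (j : ι) :
    (A * secondMoment μ Z) i j = ∫ ω, (A *ᵥ Z ω) i * Z ω j ∂μ := by
  have hint : ∀ k, Integrable (fun ω => A i k * (Z ω k * Z ω j)) μ := fun k =>
    ((hZ.eval k).integrable_mul (hZ.eval j)).const_mul _
  calc (A * secondMoment μ Z) i j = ∑ k, ∫ ω, A i k * (Z ω k * Z ω j) ∂μ := by
        simp only [mul_apply, secondMoment, of_apply, integral_const_mul]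
    _ = ∫ ω, ∑ k, A i k * (Z ω k * Z ω j) ∂μ := (integral_finsetSum _ fun k _ => hint k).symm
    _ = ∫ ω, (A *ᵥ Z ω) i * Z ω j ∂μ := by
        simp only [mulVec, dotProduct, Finset.sum_mul, mul_assoc]

theorem mul_secondMoment_eq_of_ae_mulVec_eq (hZ : MemLp Z 2 μ) {A B : Matrix κ ι ℝ}
    (h : ∀ᵐ ω ∂μ, A *ᵥ Z ω = B *ᵥ Z ω) : A * secondMoment μ Z = B * secondMoment μ Z := by
  ext i j
  rw [mul_secondMoment_apply hZ, mul_secondMoment_apply hZ]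
  refine integral_congr_ae ?_
  filter_upwards [h] with ω hω
  rw [hω]

end SecondMoment

theorem condExp_eq_mulVec_condExp_of_condExp_eq_mulVec {Ω : Type*} {m 𝒢 m₀ : MeasurableSpace Ω}
    {μ : Measure Ω} {n : Type*} [Fintype n] {X : Ω → n → ℝ} (hX : Integrable X μ)
    (A : Matrix n n ℝ) (hlin : μ[X|𝒢] =ᵐ[μ] fun ω => A *ᵥ X ω) (hire : μ[X|m] =ᵐ[μ] μ[μ[X|𝒢]|m]) :
    μ[X|m] =ᵐ[μ] fun ω => A *ᵥ μ[X|m] ω :=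
  hire.trans ((condExp_congr_ae hlin).trans (A.mulVec_condExp hX).symm)

theorem stmt_2_general {Ω : Type*} [MeasurableSpace Ω]
    (μ : Measure Ω) [IsProbabilityMeasure μ]
    {p d : ℕ} (X : Ω → (Fin p → ℝ))
    (hX2 : MemLp X 2 μ)
    (Sig : Matrix (Fin p) (Fin p) ℝ)
    (hSigpd : Sig.PosDef)
    (Y : Ω → ℝ)
    (η : Matrix (Fin p) (Fin d) ℝ)
    (hlcm : μ[X | MeasurableSpace.comap (fun ω => η.transpose.mulVec (X ω)) inferInstance]
      =ᵐ[μ] fun ω =>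
        (η * (η.transpose * Sig * η)⁻¹ * η.transpose * Sig).transpose.mulVec (X ω))
    (hire : μ[X | MeasurableSpace.comap Y inferInstance] =ᵐ[μ]
      μ[ μ[X | MeasurableSpace.comap (fun ω => η.transpose.mulVec (X ω)) inferInstance]
         | MeasurableSpace.comap Y inferInstance])
    (Z : Ω → (Fin p → ℝ)) (hZ2 : MemLp Z 2 μ)
    (hZ : Z =ᵐ[μ] μ[X | MeasurableSpace.comap Y inferInstance])
    (AIR : Matrix (Fin p) (Fin p) ℝ)
    (hAIR : AIR = Sig⁻¹ * Matrix.of (fun i j => ∫ ω, Z ω i * Z ω j ∂μ) * Sig⁻¹) :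
    (∀ᵐ ω ∂μ, Sig⁻¹.mulVec (Z ω) =
      (η * (η.transpose * Sig * η)⁻¹ * η.transpose * Sig).mulVec (Sig⁻¹.mulVec (Z ω))) ∧
    (∀ᵐ ω ∂μ, Sig⁻¹.mulVec (Z ω) ∈ LinearMap.range η.mulVecLin) ∧
    LinearMap.range AIR.mulVecLin ≤ LinearMap.range η.mulVecLin := by
  change AIR = Sig⁻¹ * secondMoment μ Z * Sig⁻¹ at hAIR
  set P := colSpanProj Sig η
  have hSigdet : IsUnit Sig.det := (isUnit_iff_isUnit_det Sig).mp hSigpd.isUnit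
  have hZfix : Z =ᵐ[μ] fun ω => Pᵀ *ᵥ Z ω := by
    have h := condExp_eq_mulVec_condExp_of_condExp_eq_mulVec (hX2.integrable one_le_two) Pᵀ
      hlcm hire
    filter_upwards [hZ, h] with ω hω hfix
    rw [hω]
    exact hfix
  have hinvZ : ∀ᵐ ω ∂μ, Sig⁻¹ *ᵥ Z ω = P *ᵥ (Sig⁻¹ *ᵥ Z ω) := by
    filter_upwards [hZfix] with ω hω
    rw [mulVec_mulVec, ← inv_mul_transpose_colSpanProj (isHermitian_iff_isSymm.mp hSigpd.1)
      hSigdet, ← mulVec_mulVec, ← hω]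
  have hAIR_fix : AIR = P * AIR := by
    have h := mul_secondMoment_eq_of_ae_mulVec_eq (A := Sig⁻¹) (B := P * Sig⁻¹) hZ2
      (by simpa only [← mulVec_mulVec] using hinvZ)
    nth_rewrite 1 [hAIR]
    rw [h, hAIR]
    simp only [Matrix.mul_assoc]
  refine ⟨hinvZ, ?_, ?_⟩
  · filter_upwards [hinvZ] with ω hω
    rw [hω]
    exact range_mulVecLin_colSpanProj_le Sig η ⟨_, rfl⟩
  · rw [hAIR_fix]
    exact (range_mulVecLin_mul_le P AIR).trans (range_mulVecLin_colSpanProj_le Sig η)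

/-- Theorem 2.1, part 2, inclusion `S_IR ⊆ S_CSS`: if the linear conditional mean holds for `η`
and `η` solves the inverse regression equation, then `Σ⁻¹E[X|σ(Y)] = P_η(Σ) Σ⁻¹E[X|σ(Y)]` a.e.,
so `Σ⁻¹E[X|σ(Y)]` lies a.s. in `span(η)` and the column space of
`A_IR = Σ⁻¹ E[ZZᵀ] Σ⁻¹` is contained in `span(η)`. -/
theorem stmt_2 {Ω : Type*} [MeasurableSpace Ω]
    (μ : Measure Ω) [IsProbabilityMeasure μ]
    {p d : ℕ} (X : Ω → (Fin p → ℝ)) (hX : Measurable X)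
    (hX2 : MemLp X 2 μ) (hmean : ∫ ω, X ω ∂μ = 0)
    (Sig : Matrix (Fin p) (Fin p) ℝ)
    (hSig : ∀ i j, Sig i j = ∫ ω, X ω i * X ω j ∂μ)
    (hSigpd : Sig.PosDef)
    (Y : Ω → ℝ) (hY : Measurable Y)
    (η : Matrix (Fin p) (Fin d) ℝ)
    (hη : IsUnit (η.transpose * Sig * η).det)
    (hlcm : μ[X | MeasurableSpace.comap (fun ω => η.transpose.mulVec (X ω)) inferInstance]
      =ᵐ[μ] fun ω =>
        (η * (η.transpose * Sig * η)⁻¹ * η.transpose * Sig).transpose.mulVec (X ω))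
    (hire : μ[X | MeasurableSpace.comap Y inferInstance] =ᵐ[μ]
      μ[ μ[X | MeasurableSpace.comap (fun ω => η.transpose.mulVec (X ω)) inferInstance]
         | MeasurableSpace.comap Y inferInstance])
    (Z : Ω → (Fin p → ℝ)) (hZ2 : MemLp Z 2 μ)
    (hZ : Z =ᵐ[μ] μ[X | MeasurableSpace.comap Y inferInstance])
    (AIR : Matrix (Fin p) (Fin p) ℝ)
    (hAIR : AIR = Sig⁻¹ * Matrix.of (fun i j => ∫ ω, Z ω i * Z ω j ∂μ) * Sig⁻¹) :
    (∀ᵐ ω ∂μ, Sig⁻¹.mulVec (Z ω) =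
      (η * (η.transpose * Sig * η)⁻¹ * η.transpose * Sig).mulVec (Sig⁻¹.mulVec (Z ω))) ∧
    (∀ᵐ ω ∂μ, Sig⁻¹.mulVec (Z ω) ∈ LinearMap.range η.mulVecLin) ∧
    LinearMap.range AIR.mulVecLin ≤ LinearMap.range η.mulVecLin :=
  stmt_2_general μ X hX2 Sig hSigpd Y η hlcm hire Z hZ2 hZ AIR hAIR
end

section
/- Let V : Ω → ℝᵖ be a square-integrable random vector, A = E[VVᵀ], and let P be a real p×p matrix such that PA = A. Then V = PV P-almost everywhere. (The trace computation underlying the converse inclusions in Theorems 2.1 and 4.1: E‖V − PV‖² = tr((I−P)A(I−P)ᵀ) = 0.) -/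
open MeasureTheory Matrix

/-! For any vector `c`, `E[(c ⬝ V)²] = cᵀ A c`. The `i`-th coordinate of the residual `V - P V` is
`c ⬝ V` with `c` the `i`-th row of `1 - P`, and then `cᵀ A c = ((1 - P) A)ᵢ ⬝ c = 0`, so that
coordinate has zero mean square. -/

section SecondMoment

variable {Ω ι : Type*} [MeasurableSpace Ω] {μ : Measure Ω} [Fintype ι] {V : Ω → ι → ℝ}

lemma integrable_coord_mul_coord (hV : MemLp V 2 μ) (i j : ι) :
    Integrable (fun ω => V ω i * V ω j) μ :=
  (hV.eval i).integrable_mul (hV.eval j)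

lemma integral_dotProduct_sq (hV : MemLp V 2 μ) {A : Matrix ι ι ℝ}
    (hA : ∀ i j, A i j = ∫ ω, V ω i * V ω j ∂μ) (c : ι → ℝ) :
    ∫ ω, (c ⬝ᵥ V ω) ^ 2 ∂μ = c ⬝ᵥ A *ᵥ c := by
  have hexpand : ∀ ω, (c ⬝ᵥ V ω) ^ 2 = ∑ i, ∑ j, c i * c j * (V ω i * V ω j) := by
    intro ω
    simp only [sq, dotProduct, Finset.sum_mul_sum]
    exact Finset.sum_congr rfl fun i _ => Finset.sum_congr rfl fun j _ => by ring
  calc ∫ ω, (c ⬝ᵥ V ω) ^ 2 ∂μ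
      = ∫ ω, ∑ i, ∑ j, c i * c j * (V ω i * V ω j) ∂μ := by simp_rw [hexpand]
    _ = ∑ i, ∑ j, c i * c j * A i j := by
        rw [integral_finsetSum _ fun i _ => integrable_finsetSum _ fun j _ =>
          (integrable_coord_mul_coord hV i j).const_mul _]
        refine Finset.sum_congr rfl fun i _ => ?_
        rw [integral_finsetSum _ fun j _ => (integrable_coord_mul_coord hV i j).const_mul _]
        exact Finset.sum_congr rfl fun j _ => by rw [integral_const_mul, hA]
    _ = c ⬝ᵥ A *ᵥ c := by
        simp only [dotProduct, mulVec, Finset.mul_sum]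
        exact Finset.sum_congr rfl fun i _ => Finset.sum_congr rfl fun j _ => by ring

lemma ae_dotProduct_eq_zero (hV : MemLp V 2 μ) {A : Matrix ι ι ℝ}
    (hA : ∀ i j, A i j = ∫ ω, V ω i * V ω j ∂μ) {c : ι → ℝ} (hc : c ⬝ᵥ A *ᵥ c = 0) :
    ∀ᵐ ω ∂μ, c ⬝ᵥ V ω = 0 := by
  have hmem : MemLp (fun ω => c ⬝ᵥ V ω) 2 μ :=
    memLp_finsetSum Finset.univ fun i _ => (hV.eval i).const_mul (c i)
  have hint : ∫ ω, (c ⬝ᵥ V ω) ^ 2 ∂μ = 0 := (integral_dotProduct_sq hV hA c).trans hc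
  rw [integral_eq_zero_iff_of_nonneg (fun ω => sq_nonneg _) hmem.integrable_sq] at hint
  filter_upwards [hint] with ω hω
  exact pow_eq_zero_iff two_ne_zero |>.mp hω

end SecondMoment

theorem stmt_3_general {Ω : Type*} [MeasurableSpace Ω]
    (μ : Measure Ω)
    {p : ℕ} (V : Ω → (Fin p → ℝ)) (hV2 : MemLp V 2 μ)
    (A : Matrix (Fin p) (Fin p) ℝ)
    (hA : ∀ i j, A i j = ∫ ω, V ω i * V ω j ∂μ)
    (P : Matrix (Fin p) (Fin p) ℝ)
    (hPA : P * A = A) :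
    ∀ᵐ ω ∂μ, V ω = P.mulVec (V ω) := by
  set Q := 1 - P
  have hQA : Q * A = 0 := by rw [Matrix.sub_mul, hPA, Matrix.one_mul, sub_self]
  have hrow : ∀ i, Q i ⬝ᵥ A *ᵥ Q i = 0 := fun i => by
    rw [dotProduct_mulVec, ← mul_apply_eq_vecMul, hQA]
    exact zero_dotProduct _
  filter_upwards [ae_all_iff.mpr fun i => ae_dotProduct_eq_zero hV2 hA (hrow i)] with ω hω
  have hresidual : Q *ᵥ V ω = 0 := funext hω
  rwa [Matrix.sub_mulVec, Matrix.one_mulVec, sub_eq_zero] at hresidual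

/-- If `V` is a square-integrable random vector, `A = E[VVᵀ]` and `P A = A`, then `V = PV`
almost everywhere (since `E‖V − PV‖² = tr((I−P)A(I−P)ᵀ) = 0`). -/
theorem stmt_3 {Ω : Type*} [MeasurableSpace Ω]
    (μ : Measure Ω) [IsProbabilityMeasure μ]
    {p : ℕ} (V : Ω → (Fin p → ℝ)) (hV2 : MemLp V 2 μ)
    (A : Matrix (Fin p) (Fin p) ℝ)
    (hA : ∀ i j, A i j = ∫ ω, V ω i * V ω j ∂μ)
    (P : Matrix (Fin p) (Fin p) ℝ)
    (hPA : P * A = A) :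
    ∀ᵐ ω ∂μ, V ω = P.mulVec (V ω) :=
  stmt_3_general μ V hV2 A hA P hPA
end

section
/- Let X : Ω → ℝᵖ be integrable, Y, Ỹ : Ω → ℝ measurable, with Ỹ independent of the pair (X, Y) and with the law of Ỹ equal to the law of Y. Let δ : ℝ → Fin k be measurable with P(δ∘Y = j) > 0 for every j. Then for every j ∈ Fin k, P(δ(Y) = δ(Ỹ) and δ(Ỹ) = j) > 0 and E[X·1{δ(Y)=j}] / P(δ(Y)=j) = E[X·1{δ(Y)=δ(Ỹ)}·1{δ(Ỹ)=j}] / P(δ(Y)=δ(Ỹ) and δ(Ỹ)=j). (The slice identity in the proof of Theorem 3.1 showing that A_SIR has the common form (9).) -/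
/-!
Write `S = δ⁻¹{j}`, `A = {Y ∈ S}` and `B = {Ỹ ∈ S}`; the matched slice is `A ∩ B`. Since `B` is
independent of `(X, Y)`, and `X·1_A` is a function of `(X, Y)`, integrating over `A ∩ B`
multiplies both the mass and the integral over `A` by the same factor `P(B) = P(A) > 0`, which
cancels in the normalised average.
-/

open MeasureTheory ProbabilityTheory

namespace ProbabilityTheory

variable {Ω 𝓦 𝓩 E : Type*} {mΩ : MeasurableSpace Ω} [MeasurableSpace 𝓦] [MeasurableSpace 𝓩]
  [NormedAddCommGroup E] [NormedSpace ℝ E] {μ : Measure Ω}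

lemma IndepFun.setIntegral_preimage_inter_preimage_eq_smul {Z : Ω → 𝓩} {W : Ω → 𝓦}
    (hZW : Z ⟂ᵢ[μ] W) (hZ : Measurable Z) (hW : Measurable W) {f : 𝓦 → E}
    (hf : AEStronglyMeasurable f (μ.map W)) {s : Set 𝓦} {t : Set 𝓩} (hs : MeasurableSet s)
    (ht : MeasurableSet t) :
    ∫ ω in W ⁻¹' s ∩ Z ⁻¹' t, f (W ω) ∂μ = μ.real (Z ⁻¹' t) • ∫ ω in W ⁻¹' s, f (W ω) ∂μ := by
  have hindep : Indep (MeasurableSpace.comap Z inferInstance)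
      (MeasurableSpace.comap W inferInstance) μ := (IndepFun_iff_Indep _ _ _).1 hZW
  calc ∫ ω in W ⁻¹' s ∩ Z ⁻¹' t, f (W ω) ∂μ
      = ∫ ω in Z ⁻¹' t, s.indicator f (W ω) ∂μ := by
        rw [Set.inter_comm, ← setIntegral_indicator (hW hs)]
        rfl
    _ = μ.real (Z ⁻¹' t) • ∫ ω, s.indicator f (W ω) ∂μ :=
        hindep.setIntegral_eq_smul hZ.comap_le hW.aemeasurable ⟨t, ht, rfl⟩ (hf.indicator hs)
    _ = μ.real (Z ⁻¹' t) • ∫ ω in W ⁻¹' s, f (W ω) ∂μ := by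
        rw [← integral_indicator (hW hs)]
        rfl

end ProbabilityTheory

lemma Set.setOf_eq_and_eq_eq_inter {Ω β : Type*} (a b : Ω → β) (j : β) :
    {ω | a ω = b ω ∧ b ω = j} = {ω | a ω = j} ∩ {ω | b ω = j} := by
  ext ω
  exact ⟨fun ⟨hab, hb⟩ => ⟨hab.trans hb, hb⟩, fun ⟨ha, hb⟩ => ⟨ha.trans hb.symm, hb⟩⟩

theorem stmt_6_general {Ω : Type*} [MeasurableSpace Ω]
    (μ : Measure Ω) [IsProbabilityMeasure μ]
    {p k : ℕ} (X : Ω → (Fin p → ℝ)) (Y Ytil : Ω → ℝ)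
    (hX : Measurable X) (hY : Measurable Y) (hYtil : Measurable Ytil)
    (hindep : IndepFun Ytil (fun ω => (X ω, Y ω)) μ)
    (hlaw : Measure.map Ytil μ = Measure.map Y μ)
    (δ : ℝ → Fin k) (hδ : Measurable δ)
    (hpos : ∀ j : Fin k, 0 < μ {ω | δ (Y ω) = j}) :
    ∀ j : Fin k,
      0 < μ {ω | δ (Y ω) = δ (Ytil ω) ∧ δ (Ytil ω) = j} ∧
      (μ {ω | δ (Y ω) = j}).toReal⁻¹ • (∫ ω in {ω | δ (Y ω) = j}, X ω ∂μ) =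
        (μ {ω | δ (Y ω) = δ (Ytil ω) ∧ δ (Ytil ω) = j}).toReal⁻¹ •
          (∫ ω in {ω | δ (Y ω) = δ (Ytil ω) ∧ δ (Ytil ω) = j}, X ω ∂μ) := by
  intro j
  have hS : MeasurableSet (δ ⁻¹' {j}) := hδ (measurableSet_singleton j)
  have hB : μ (Ytil ⁻¹' (δ ⁻¹' {j})) = μ (Y ⁻¹' (δ ⁻¹' {j})) := by
    rw [← Measure.map_apply hYtil hS, hlaw, Measure.map_apply hY hS]
  have hA : {ω | δ (Y ω) = j} = (fun ω => (X ω, Y ω)) ⁻¹' (Set.univ ×ˢ (δ ⁻¹' {j})) := by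
    ext ω
    simp
  have hmass : μ ({ω | δ (Y ω) = j} ∩ {ω | δ (Ytil ω) = j}) = μ {ω | δ (Y ω) = j} ^ 2 := by
    have hYtilY : IndepFun Ytil Y μ := hindep.comp measurable_id measurable_snd
    rw [Set.inter_comm, sq]
    exact (hYtilY.measure_inter_preimage_eq_mul _ _ hS hS).trans (by rw [hB]; rfl)
  have hintegral : ∫ ω in {ω | δ (Y ω) = j} ∩ {ω | δ (Ytil ω) = j}, X ω ∂μ =
      μ.real {ω | δ (Y ω) = j} • ∫ ω in {ω | δ (Y ω) = j}, X ω ∂μ := by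
    have h := hindep.setIntegral_preimage_inter_preimage_eq_smul hYtil (hX.prodMk hY)
      measurable_fst.aestronglyMeasurable (MeasurableSet.univ.prod hS) hS
    rwa [← hA, measureReal_def, hB] at h
  have hA0 : (μ {ω | δ (Y ω) = j}).toReal ≠ 0 :=
    ENNReal.toReal_ne_zero.2 ⟨(hpos j).ne', measure_ne_top _ _⟩
  rw [Set.setOf_eq_and_eq_eq_inter, hmass, hintegral, ENNReal.toReal_pow, smul_smul,
    measureReal_def]
  refine ⟨pos_iff_ne_zero.2 (pow_ne_zero 2 (hpos j).ne'), ?_⟩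
  congr 1
  field_simp

/-- The slice identity in the proof of Theorem 3.1: if `Ỹ ⟂⟂ (X, Y)` and `Ỹ =ᵈ Y`, then for
every slice `j`, `P(δ(Y) = δ(Ỹ), δ(Ỹ) = j) > 0` and
`E[X·1{δ(Y)=j}]/P(δ(Y)=j) = E[X·1{δ(Y)=δ(Ỹ)}1{δ(Ỹ)=j}]/P(δ(Y)=δ(Ỹ), δ(Ỹ)=j)`. -/
theorem stmt_6 {Ω : Type*} [MeasurableSpace Ω]
    (μ : Measure Ω) [IsProbabilityMeasure μ]
    {p k : ℕ} (X : Ω → (Fin p → ℝ)) (Y Ytil : Ω → ℝ)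
    (hX : Measurable X) (hY : Measurable Y) (hYtil : Measurable Ytil)
    (hXint : Integrable X μ)
    (hindep : IndepFun Ytil (fun ω => (X ω, Y ω)) μ)
    (hlaw : Measure.map Ytil μ = Measure.map Y μ)
    (δ : ℝ → Fin k) (hδ : Measurable δ)
    (hpos : ∀ j : Fin k, 0 < μ {ω | δ (Y ω) = j}) :
    ∀ j : Fin k,
      0 < μ {ω | δ (Y ω) = δ (Ytil ω) ∧ δ (Ytil ω) = j} ∧
      (μ {ω | δ (Y ω) = j}).toReal⁻¹ • (∫ ω in {ω | δ (Y ω) = j}, X ω ∂μ) =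
        (μ {ω | δ (Y ω) = δ (Ytil ω) ∧ δ (Ytil ω) = j}).toReal⁻¹ •
          (∫ ω in {ω | δ (Y ω) = δ (Ytil ω) ∧ δ (Ytil ω) = j}, X ω ∂μ) :=
  stmt_6_general μ X Y Ytil hX hY hYtil hindep hlaw δ hδ hpos
end

section
/- Let U : Ω → E and W : Ω → F be random elements taking values in standard Borel spaces, and let f : F → G be a measurable map into a standard Borel space. Suppose U and W are conditionally independent given σ(f∘W). Then for every measurable h : E × G → ℝ such that ω ↦ h(U(ω), f(W(ω))) is integrable, E[ h(U, f∘W) | σ(W) ] = E[ h(U, f∘W) | σ(f∘W) ] P-almost everywhere. (The reduction step in the proof of Theorem 3.1 by which a conditional expectation given Ỹ of a function of (X, Y, δ(Ỹ)) reduces to the conditional expectation given δ(Ỹ).) -/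
/-!
Since `f ∘ W` is a function of `W`, conditioning on `W` is conditioning on the pair
`(f ∘ W, W)`. Both conditional expectations are then integrals of `h(·, f ∘ W)` against a regular
conditional distribution of `U`, given `(f ∘ W, W)` and given `f ∘ W` respectively, and
conditional independence of `U` and `W` given `f ∘ W` says exactly that these two conditional
distributions agree almost surely.
-/

open MeasureTheory ProbabilityTheory

lemma MeasurableSpace.comap_prodMk_comp_self {α β γ : Type*} {mβ : MeasurableSpace β}
    {mγ : MeasurableSpace γ} {W : α → β} {f : β → γ} (hf : Measurable f) :
    (mγ.prod mβ).comap (fun ω ↦ (f (W ω), W ω)) = mβ.comap W := by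
  rw [MeasurableSpace.comap_prodMk, sup_eq_right]
  exact (hf.comp (comap_measurable W)).comap_le

namespace ProbabilityTheory

variable {Ω α β γ : Type*} {mΩ : MeasurableSpace Ω} [StandardBorelSpace Ω]
  [MeasurableSpace α] [StandardBorelSpace α] [Nonempty α]
  [MeasurableSpace β] [StandardBorelSpace β] [Nonempty β] [MeasurableSpace γ]
  {μ : Measure Ω} [IsFiniteMeasure μ] {X : Ω → α} {Y : Ω → β} {k : Ω → γ}

lemma ae_condDistrib_prodMk_eq_of_condIndepFun (hX : Measurable X) (hY : Measurable Y)
    (hk : Measurable k)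
    (hci : CondIndepFun (MeasurableSpace.comap k inferInstance) hk.comap_le Y X μ) :
    ∀ᵐ ω ∂μ, condDistrib Y (fun ω ↦ (k ω, X ω)) μ (k ω, X ω) = condDistrib Y k μ (k ω) :=
  ae_of_ae_map (hk.prodMk hX).aemeasurable
    ((condIndepFun_iff_condDistrib_prod_ae_eq_prodMkRight hY hX hk).mp hci.symm)

lemma condExp_comap_prodMk_ae_eq_of_condIndepFun (hX : Measurable X) (hY : Measurable Y)
    (hk : Measurable k)
    (hci : CondIndepFun (MeasurableSpace.comap k inferInstance) hk.comap_le Y X μ)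
    {h : β × γ → ℝ} (hh : Measurable h) (hint : Integrable (fun ω ↦ h (Y ω, k ω)) μ) :
    μ[fun ω ↦ h (Y ω, k ω) | MeasurableSpace.comap (fun ω ↦ (k ω, X ω)) inferInstance] =ᵐ[μ]
      μ[fun ω ↦ h (Y ω, k ω) | MeasurableSpace.comap k inferInstance] := calc
  _ =ᵐ[μ] fun ω ↦ ∫ y, h (y, k ω) ∂condDistrib Y (fun ω ↦ (k ω, X ω)) μ (k ω, X ω) :=
    condExp_prod_ae_eq_integral_condDistrib (hk.prodMk hX) hY.aemeasurable
      (f := fun p ↦ h (p.2, p.1.1)) (by fun_prop) hint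
  _ =ᵐ[μ] fun ω ↦ ∫ y, h (y, k ω) ∂condDistrib Y k μ (k ω) := by
    filter_upwards [ae_condDistrib_prodMk_eq_of_condIndepFun hX hY hk hci] with ω hω
    rw [hω]
  _ =ᵐ[μ] _ := (condExp_prod_ae_eq_integral_condDistrib hk hY.aemeasurable
      (f := fun p ↦ h (p.2, p.1)) (by fun_prop) hint).symm

end ProbabilityTheory

theorem stmt_8_general {Ω E F G : Type*} [MeasurableSpace Ω] [StandardBorelSpace Ω]
    [MeasurableSpace E] [StandardBorelSpace E]
    [MeasurableSpace F] [StandardBorelSpace F]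
    [MeasurableSpace G]
    (μ : Measure Ω) [IsProbabilityMeasure μ]
    (U : Ω → E) (W : Ω → F) (f : F → G)
    (hU : Measurable U) (hW : Measurable W) (hf : Measurable f)
    (hci : CondIndepFun (MeasurableSpace.comap (fun ω => f (W ω)) inferInstance)
      ((hf.comp hW).comap_le) U W μ) :
    ∀ h : E × G → ℝ, Measurable h →
      Integrable (fun ω => h (U ω, f (W ω))) μ →
      μ[(fun ω => h (U ω, f (W ω))) | MeasurableSpace.comap W inferInstance] =ᵐ[μ]
        μ[(fun ω => h (U ω, f (W ω))) |
          MeasurableSpace.comap (fun ω => f (W ω)) inferInstance] := by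
  intro h hh hint
  obtain ⟨ω⟩ := nonempty_of_isProbabilityMeasure μ
  have : Nonempty E := ⟨U ω⟩
  have : Nonempty F := ⟨W ω⟩
  rw [← MeasurableSpace.comap_prodMk_comp_self hf]
  exact condExp_comap_prodMk_ae_eq_of_condIndepFun hW hU (hf.comp hW) hci hh hint

/-- If `U` and `W` are conditionally independent given `σ(f ∘ W)`, then for any integrable
`h(U, f∘W)`, `E[ h(U, f∘W) | σ(W) ] = E[ h(U, f∘W) | σ(f∘W) ]` almost everywhere. -/
theorem stmt_8 {Ω E F G : Type*} [MeasurableSpace Ω] [StandardBorelSpace Ω]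
    [MeasurableSpace E] [StandardBorelSpace E]
    [MeasurableSpace F] [StandardBorelSpace F]
    [MeasurableSpace G] [StandardBorelSpace G]
    (μ : Measure Ω) [IsProbabilityMeasure μ]
    (U : Ω → E) (W : Ω → F) (f : F → G)
    (hU : Measurable U) (hW : Measurable W) (hf : Measurable f)
    (hci : CondIndepFun (MeasurableSpace.comap (fun ω => f (W ω)) inferInstance)
      ((hf.comp hW).comap_le) U W μ) :
    ∀ h : E × G → ℝ, Measurable h →
      Integrable (fun ω => h (U ω, f (W ω))) μ →
      μ[(fun ω => h (U ω, f (W ω))) | MeasurableSpace.comap W inferInstance] =ᵐ[μ]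
        μ[(fun ω => h (U ω, f (W ω))) |
          MeasurableSpace.comap (fun ω => f (W ω)) inferInstance] :=
  stmt_8_general μ U W f hU hW hf hci
end

section
/- For 1 ≤ i < j ≤ p and θ ∈ ℝ, let B_ij(θ) denote the p×p Givens rotation matrix which agrees with the identity matrix except that its (i,i) and (j,j) entries equal cos(θ), its (i,j) entry equals −sin(θ), and its (j,i) entry equals sin(θ). Then every real p×p matrix A with AᵀA = I and det(A) = 1 can be written as A = ∏_{1 ≤ i < j ≤ p} B_ij(θ_ij) for some angles θ_ij ∈ ℝ, where the product is taken in lexicographic order of the index pairs (i, j). (The polar-coordinate parameterization (17) of orthogonal matrices in Section 5.) -/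
open Matrix

/-- The `p×p` Givens rotation matrix `B_ij(θ)`: identity except entries
`(i,i) = (j,j) = cos θ`, `(i,j) = −sin θ`, `(j,i) = sin θ`. -/
noncomputable def givens (p : ℕ) (i j : Fin p) (θ : ℝ) : Matrix (Fin p) (Fin p) ℝ :=
  Matrix.of fun a b =>
    if a = i ∧ b = i then Real.cos θ
    else if a = j ∧ b = j then Real.cos θ
    else if a = i ∧ b = j then -Real.sin θ
    else if a = j ∧ b = i then Real.sin θ
    else if a = b then 1 else 0

/-- The list of index pairs `(i, j)` with `i < j`, in lexicographic order. -/
def lexPairs (p : ℕ) : List (Fin p × Fin p) :=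
  (List.finRange p).flatMap fun i =>
    ((List.finRange p).filter fun j => decide (i < j)).map fun j => (i, j)

/-!
Induction on `p`. For suitable angles the product `B_12 ⋯ B_1p` maps `e₁` to any given unit
vector (spherical coordinates), so some such product `P` has `P e₁ = A e₁`. Then `Pᵀ A` is
special orthogonal and fixes `e₁`, hence equals `diag(1, A')` with `A'` special orthogonal of
size `p - 1`, and the rotations `B_ij` with `2 ≤ i < j` are exactly the rotations of that lower
block, to which the induction hypothesis applies.
-/

theorem transpose_mem_specialOrthogonalGroup {n R : Type*} [Fintype n] [DecidableEq n]
    [CommRing R] {A : Matrix n n R} (hA : A ∈ specialOrthogonalGroup n R) :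
    Aᵀ ∈ specialOrthogonalGroup n R :=
  ⟨(mem_orthogonalGroup_iff' _ _).2 <| by
      rw [transpose_transpose]; exact (mem_orthogonalGroup_iff _ _).1 hA.1,
    (det_transpose A).trans hA.2⟩

section Givens

variable {p : ℕ} {i j : Fin p}

theorem givens_mulVec (hij : i ≠ j) (θ : ℝ) (v : Fin p → ℝ) :
    givens p i j θ *ᵥ v = fun a =>
      if a = i then Real.cos θ * v i - Real.sin θ * v j
      else if a = j then Real.sin θ * v i + Real.cos θ * v j
      else v a := by
  funext a
  by_cases hai : a = i
  · subst hai
    rw [mulVec, dotProduct, Fintype.sum_eq_add a j hij]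
    · simp [givens, hij, hij.symm]; ring
    · rintro b ⟨hbi, hbj⟩
      simp [givens, hbi, hbj, hij, Ne.symm hbi]
  by_cases haj : a = j
  · subst haj
    rw [mulVec, dotProduct, Fintype.sum_eq_add i a hij]
    · simp [givens, hij, hij.symm]
    · rintro b ⟨hbi, hbj⟩
      simp [givens, hbi, hbj, hij.symm, Ne.symm hbj]
  · rw [mulVec, dotProduct, Fintype.sum_eq_single a]
    · simp [givens, hai, haj]
    · intro b hba
      simp [givens, hai, haj, Ne.symm hba]

theorem givens_transpose (θ : ℝ) : (givens p i j θ)ᵀ = givens p i j (-θ) := by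
  ext a b
  simp only [transpose_apply, givens, of_apply, Real.cos_neg, Real.sin_neg, neg_neg]
  by_cases hai : a = i <;> by_cases haj : a = j <;> by_cases hbi : b = i <;>
    by_cases hbj : b = j <;> simp_all [eq_comm]

theorem givens_add (hij : i ≠ j) (θ φ : ℝ) :
    givens p i j (θ + φ) = givens p i j θ * givens p i j φ := by
  refine ext_of_mulVec_single fun k => ?_
  rw [← mulVec_mulVec, givens_mulVec hij, givens_mulVec hij, givens_mulVec hij]
  funext a
  simp only [Real.cos_add, Real.sin_add, if_neg hij.symm]
  split_ifs <;> ring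

theorem givens_zero (hij : i ≠ j) : givens p i j 0 = 1 := by
  refine ext_of_mulVec_single fun k => ?_
  rw [givens_mulVec hij, one_mulVec]
  funext a
  simp only [Real.cos_zero, Real.sin_zero]
  split_ifs <;> simp_all

theorem givens_mem_specialOrthogonalGroup (hij : i ≠ j) (θ : ℝ) :
    givens p i j θ ∈ specialOrthogonalGroup (Fin p) ℝ := by
  have horth : (givens p i j θ)ᵀ * givens p i j θ = 1 := by
    rw [givens_transpose, ← givens_add hij, neg_add_cancel, givens_zero hij]
  have hdet_sq : (givens p i j θ).det ^ 2 = 1 := by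
    simpa [det_transpose, sq] using congrArg det horth
  -- the determinant is a square, `det (givens (θ / 2)) ^ 2`, hence not `-1`
  have hdet_nonneg : 0 ≤ (givens p i j θ).det := by
    rw [← add_halves θ, givens_add hij, det_mul]
    exact mul_self_nonneg _
  refine mem_specialOrthogonalGroup_iff.2 ⟨(mem_orthogonalGroup_iff' _ _).2 horth, ?_⟩
  nlinarith

end Givens

section BlockDiagOne

variable {R : Type*} {m : ℕ}

def blockDiagOne [Semiring R] :
    Matrix (Fin m) (Fin m) R →* Matrix (Fin (m + 1)) (Fin (m + 1)) R where
  toFun M := of (Fin.cons (Pi.single 0 1) fun a => Fin.cons 0 (M a))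
  map_one' := by
    ext a b
    cases a using Fin.cases <;> cases b using Fin.cases <;>
      simp [one_apply, Fin.succ_ne_zero, eq_comm (a := (0 : Fin (m + 1)))]
  map_mul' M N := by
    ext a b
    cases a using Fin.cases <;> cases b using Fin.cases <;> simp [mul_apply, Fin.sum_univ_succ]

@[simp]
theorem blockDiagOne_apply [Semiring R] (M : Matrix (Fin m) (Fin m) R) :
    blockDiagOne M = of (Fin.cons (Pi.single 0 1) fun a => Fin.cons 0 (M a)) := rfl

theorem blockDiagOne_injective [Semiring R] :
    Function.Injective (blockDiagOne : Matrix (Fin m) (Fin m) R → _) := fun M N h => by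
  ext a b
  simpa using congrFun₂ h a.succ b.succ

theorem transpose_blockDiagOne [Semiring R] (M : Matrix (Fin m) (Fin m) R) :
    (blockDiagOne M)ᵀ = blockDiagOne Mᵀ := by
  ext a b
  cases a using Fin.cases <;> cases b using Fin.cases <;> simp

theorem det_blockDiagOne [CommRing R] (M : Matrix (Fin m) (Fin m) R) :
    (blockDiagOne M).det = M.det := by
  rw [det_succ_column_zero, Fin.sum_univ_succ]
  simp [submatrix]
  rfl

theorem blockDiagOne_mem_specialOrthogonalGroup_iff [CommRing R]
    {M : Matrix (Fin m) (Fin m) R} :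
    blockDiagOne M ∈ specialOrthogonalGroup (Fin (m + 1)) R ↔
      M ∈ specialOrthogonalGroup (Fin m) R := by
  simp only [mem_specialOrthogonalGroup_iff, mem_orthogonalGroup_iff', transpose_blockDiagOne,
    ← map_mul, det_blockDiagOne, ← map_one blockDiagOne, blockDiagOne_injective.eq_iff]

theorem eq_blockDiagOne_of_mulVec_single_zero [CommRing R]
    {A : Matrix (Fin (m + 1)) (Fin (m + 1)) R} (hA : Aᵀ * A = 1)
    (h : A *ᵥ Pi.single 0 1 = Pi.single 0 1) :
    A = blockDiagOne (A.submatrix Fin.succ Fin.succ) := by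
  have hrow : Aᵀ *ᵥ Pi.single 0 1 = Pi.single 0 1 := by
    rw [← h, mulVec_mulVec, hA, one_mulVec, h]
  ext a b
  cases a using Fin.cases <;> cases b using Fin.cases
  · simpa using congrFun h 0
  · simpa using (congrFun hrow _).trans (Pi.single_eq_of_ne (Fin.succ_ne_zero _) _)
  · simpa using (congrFun h _).trans (Pi.single_eq_of_ne (Fin.succ_ne_zero _) _)
  · simp

theorem exists_blockDiagOne_of_mulVec_single_zero [CommRing R]
    {A : Matrix (Fin (m + 1)) (Fin (m + 1)) R} (hA : A ∈ specialOrthogonalGroup (Fin (m + 1)) R)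
    (h : A *ᵥ Pi.single 0 1 = Pi.single 0 1) :
    ∃ B ∈ specialOrthogonalGroup (Fin m) R, A = blockDiagOne B := by
  have hA' := eq_blockDiagOne_of_mulVec_single_zero ((mem_orthogonalGroup_iff' _ _).1 hA.1) h
  exact ⟨_, blockDiagOne_mem_specialOrthogonalGroup_iff.1 (hA' ▸ hA), hA'⟩

end BlockDiagOne

section FirstColumn

theorem sum_sq_update_update {n : Type*} [Fintype n] [DecidableEq n] {i j : n} (hij : i ≠ j)
    (u : n → ℝ) {ρ : ℝ} (hρ : ρ ^ 2 = u i ^ 2 + u j ^ 2) :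
    ∑ k, Function.update (Function.update u j 0) i ρ k ^ 2 = ∑ k, u k ^ 2 := by
  have hsplit (f : n → ℝ) : ∑ k, f k = f i + f j + ∑ k ∈ ({i, j}ᶜ : Finset n), f k := by
    rw [← Finset.sum_pair hij, Finset.sum_add_sum_compl]
  rw [hsplit, hsplit fun k => u k ^ 2]
  simp only [Function.update_self, Function.update_of_ne hij.symm, hρ]
  congr 1
  · ring
  refine Finset.sum_congr rfl fun k hk => ?_
  simp only [Finset.mem_compl, Finset.mem_insert, Finset.mem_singleton, not_or] at hk
  rw [Function.update_of_ne hk.1, Function.update_of_ne hk.2]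

variable {p : ℕ} {i j : Fin p}

theorem exists_givens_mulVec_update (hij : i ≠ j) (u : Fin p → ℝ) :
    ∃ t, givens p i j t *ᵥ Function.update (Function.update u j 0) i √(u i ^ 2 + u j ^ 2) =
      u := by
  set z : ℂ := ⟨u i, u j⟩
  have hz : ‖z‖ = √(u i ^ 2 + u j ^ 2) := Complex.norm_eq_sqrt_sq_add_sq z
  refine ⟨z.arg, ?_⟩
  funext a
  rw [givens_mulVec hij]
  simp only [Function.update_self, Function.update_of_ne hij.symm, ← hz, mul_zero, sub_zero,
    add_zero]
  split_ifs with hai haj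
  · rw [hai, mul_comm, Complex.norm_mul_cos_arg]
  · rw [haj, mul_comm, Complex.norm_mul_sin_arg]
  · rw [Function.update_of_ne hai, Function.update_of_ne haj]

-- The list is nonempty because the empty product does not reach `-e_i`.
theorem exists_prod_givens_mulVec_single {j : Fin p} {l : List (Fin p)} (hi : i ∉ j :: l)
    (hl : (j :: l).Nodup) (u : Fin p → ℝ) (hu : ∀ k ∉ i :: j :: l, u k = 0) :
    ∃ θ : Fin p → ℝ,
      ((j :: l).map fun k => givens p i k (θ k)).prod *ᵥ Pi.single i √(∑ k, u k ^ 2) =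
        u := by
  induction l generalizing j u with
  | nil =>
    have hij : i ≠ j := List.ne_of_not_mem_cons hi
    obtain ⟨t, ht⟩ := exists_givens_mulVec_update hij u
    refine ⟨fun _ => t, ?_⟩
    have hsum : ∑ k, u k ^ 2 = u i ^ 2 + u j ^ 2 :=
      Fintype.sum_eq_add i j hij fun k ⟨hki, hkj⟩ => by simp [hu k (by simp [hki, hkj])]
    suffices Pi.single i √(∑ k, u k ^ 2) = Function.update (Function.update u j 0) i
        √(u i ^ 2 + u j ^ 2) by simpa [this] using ht
    funext a
    by_cases hai : a = i
    · subst hai; simp [hsum]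
    by_cases haj : a = j
    · subst haj; simp [hai]
    · simp [hai, haj, hu a (by simp [hai, haj])]
  | cons k l ih =>
    have hij : i ≠ j := List.ne_of_not_mem_cons hi
    obtain ⟨t, ht⟩ := exists_givens_mulVec_update hij u
    -- `B_ij` moves the mass of `u` at `j` into `i`; the other rotations only have to reach `v`.
    set v := Function.update (Function.update u j 0) i √(u i ^ 2 + u j ^ 2)
    have hv : ∀ x ∉ i :: k :: l, v x = 0 := by
      intro x hx
      by_cases hxj : x = j
      · simp [v, hxj, hij.symm]
      · simp only [List.mem_cons, not_or] at hx
        simp only [v, Function.update_of_ne hx.1, Function.update_of_ne hxj]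
        exact hu x (by simp [hx.1, hxj, hx.2])
    obtain ⟨θ, hθ⟩ := ih (List.not_mem_of_not_mem_cons hi) hl.of_cons v hv
    refine ⟨Function.update θ j t, ?_⟩
    have hjl : j ∉ k :: l := (List.nodup_cons.1 hl).1
    have hmap : (k :: l).map (fun x => givens p i x (Function.update θ j t x))
        = (k :: l).map fun x => givens p i x (θ x) :=
      List.map_congr_left fun x hx => by
        rw [Function.update_of_ne (ne_of_mem_of_not_mem hx hjl)]
    rw [List.map_cons, List.prod_cons, hmap, ← mulVec_mulVec,
      ← sum_sq_update_update hij u (Real.sq_sqrt (by positivity)), hθ, Function.update_self, ht]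

theorem exists_prod_givens_zero_succ_mulVec (u : Fin (p + 2) → ℝ) :
    ∃ θ : Fin (p + 2) → ℝ,
      ((List.finRange (p + 1)).map fun j => givens (p + 2) 0 j.succ (θ j.succ)).prod *ᵥ
        Pi.single 0 √(∑ k, u k ^ 2) = u := by
  have hsucc : (List.finRange (p + 1)).map Fin.succ
      = (0 : Fin (p + 1)).succ :: (List.finRange p).map (Fin.succ ∘ Fin.succ) := by
    rw [List.finRange_succ, List.map_cons, List.map_map]
  have hrange : List.finRange (p + 2) = 0 :: (0 : Fin (p + 1)).succ ::
      (List.finRange p).map (Fin.succ ∘ Fin.succ) := by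
    rw [List.finRange_succ, hsucc]
  have hnodup := List.nodup_finRange (p + 2)
  rw [hrange] at hnodup
  obtain ⟨θ, hθ⟩ := exists_prod_givens_mulVec_single (List.nodup_cons.1 hnodup).1
    (List.nodup_cons.1 hnodup).2 u fun k hk => absurd (hrange ▸ List.mem_finRange k) hk
  rw [← hsucc, List.map_map] at hθ
  exact ⟨θ, hθ⟩

end FirstColumn

theorem lexPairs_succ (p : ℕ) :
    lexPairs (p + 1) = ((List.finRange p).map fun j => ((0 : Fin (p + 1)), j.succ))
      ++ (lexPairs p).map fun ij => (ij.1.succ, ij.2.succ) := by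
  simp [lexPairs, List.finRange_succ, List.filter_map, Function.comp_def, List.flatMap_map,
    List.map_flatMap]

theorem givens_succ_succ {p : ℕ} (i j : Fin p) (θ : ℝ) :
    givens (p + 1) i.succ j.succ θ = blockDiagOne (givens p i j θ) := by
  ext a b
  cases a using Fin.cases <;> cases b using Fin.cases <;>
    simp [givens, Fin.succ_ne_zero, (Fin.succ_ne_zero _).symm]

theorem prod_lexPairs_succ {p : ℕ} (θ : Fin (p + 1) → Fin (p + 1) → ℝ) :
    ((lexPairs (p + 1)).map fun ij => givens (p + 1) ij.1 ij.2 (θ ij.1 ij.2)).prod =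
      ((List.finRange p).map fun j => givens (p + 1) 0 j.succ (θ 0 j.succ)).prod *
        blockDiagOne
          ((lexPairs p).map fun ij => givens p ij.1 ij.2 (θ ij.1.succ ij.2.succ)).prod := by
  rw [lexPairs_succ, List.map_append, List.prod_append, List.map_map, List.map_map, map_list_prod,
    List.map_map]
  simp only [Function.comp_def, givens_succ_succ]

theorem exists_eq_prod_lexPairs_givens {p : ℕ} {A : Matrix (Fin (p + 1)) (Fin (p + 1)) ℝ}
    (hA : A ∈ specialOrthogonalGroup (Fin (p + 1)) ℝ) :
    ∃ θ : Fin (p + 1) → Fin (p + 1) → ℝ,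
      A = ((lexPairs (p + 1)).map fun ij => givens (p + 1) ij.1 ij.2 (θ ij.1 ij.2)).prod := by
  induction p with
  | zero =>
    refine ⟨0, ?_⟩
    have hA1 : A 0 0 = 1 := by simpa [det_unique] using hA.2
    ext a b
    rw [Fin.fin_one_eq_zero a, Fin.fin_one_eq_zero b, show lexPairs (0 + 1) = [] from rfl]
    simpa using hA1
  | succ p ih =>
    have hcol : ∑ k, A.col 0 k ^ 2 = 1 := by
      simpa [mul_apply, sq] using congrFun₂ ((mem_orthogonalGroup_iff' _ _).1 hA.1) 0 0
    obtain ⟨θ₀, hθ₀⟩ := exists_prod_givens_zero_succ_mulVec (A.col 0)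
    rw [hcol, Real.sqrt_one, ← mulVec_single_one] at hθ₀
    set P := ((List.finRange (p + 1)).map fun j => givens (p + 2) 0 j.succ (θ₀ j.succ)).prod
    have hP : P ∈ specialOrthogonalGroup (Fin (p + 2)) ℝ := Submonoid.list_prod_mem _ <| by
      simp [givens_mem_specialOrthogonalGroup, (Fin.succ_ne_zero _).symm]
    have hfix : (Pᵀ * A) *ᵥ Pi.single 0 1 = Pi.single 0 1 := by
      rw [← mulVec_mulVec, ← hθ₀, mulVec_mulVec, (mem_orthogonalGroup_iff' _ _).1 hP.1,
        one_mulVec]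
    obtain ⟨B, hB, hPA⟩ := exists_blockDiagOne_of_mulVec_single_zero
      (mul_mem (transpose_mem_specialOrthogonalGroup hP) hA) hfix
    obtain ⟨θ', rfl⟩ := ih hB
    refine ⟨Fin.cons θ₀ fun i => Fin.cons 0 (θ' i), ?_⟩
    rw [prod_lexPairs_succ]
    simp only [Fin.cons_zero, Fin.cons_succ]
    rw [← hPA, ← mul_assoc, (mem_orthogonalGroup_iff _ _).1 hP.1, one_mul]

/-- The polar-coordinate parameterization (17) of Section 5: every special orthogonal
`p×p` matrix is a product `∏_{1 ≤ i < j ≤ p} B_ij(θ_ij)` of Givens rotations taken in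
lexicographic order of the index pairs. -/
theorem stmt_14 {p : ℕ} (A : Matrix (Fin p) (Fin p) ℝ)
    (hA : A.transpose * A = 1) (hdet : A.det = 1) :
    ∃ θ : Fin p → Fin p → ℝ,
      A = ((lexPairs p).map fun ij => givens p ij.1 ij.2 (θ ij.1 ij.2)).prod := by
  have hSO : A ∈ specialOrthogonalGroup (Fin p) ℝ :=
    mem_specialOrthogonalGroup_iff.2 ⟨(mem_orthogonalGroup_iff' _ _).2 hA, hdet⟩
  cases p with
  | zero => exact ⟨0, Subsingleton.elim _ _⟩
  | succ p => exact exists_eq_prod_lexPairs_givens hSO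
end

section
/- For 1 ≤ i < j ≤ p and θ ∈ ℝ, let B_ij(θ) denote the p×p Givens rotation matrix which agrees with the identity matrix except that its (i,i) and (j,j) entries equal cos(θ), its (i,j) entry equals −sin(θ), and its (j,i) entry equals sin(θ). Fix 1 ≤ d < p and angles θ_ij ∈ ℝ for all 1 ≤ i < j ≤ p. Then the first d columns of the full product ∏_{1 ≤ i < j ≤ p} B_ij(θ_ij) (taken in lexicographic order of (i,j)) coincide with the first d columns of the partial product ∏_{1 ≤ i ≤ d, i < j ≤ p} B_ij(θ_ij) (taken in the same order). In particular, the first d columns of the full product depend only on the angles θ_ij with i ≤ d. (The reduction (18)–(19) in Section 5.) -/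
/-!
Lexicographic order puts every rotation `B_ij` with `i < d` before every rotation with `i ≥ d`,
so the full product is the partial product followed by a product of rotations `B_ij` with
`d ≤ i < j`. Each of these fixes `e_k` for `k < d`, hence so does their product, and right
multiplication by a matrix fixing `e_k` leaves the `k`-th column unchanged.
-/

open Matrix

theorem List.filter_append_filter_not_of_pairwise {α : Type*} {q : α → Bool} :
    ∀ {l : List α}, l.Pairwise (fun a b => q b → q a) →
      l.filter q ++ l.filter (fun a => !q a) = l
  | [], _ => rfl
  | a :: t, hl => by
    obtain ⟨ha, ht⟩ := List.pairwise_cons.1 hl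
    by_cases hqa : q a
    · simp [hqa, List.filter_append_filter_not_of_pairwise ht]
    · have hqt : ∀ b ∈ t, q b = false := fun b hb => by
        by_contra hqb
        exact hqa (ha b hb (by simpa using hqb))
      simpa [hqa, List.filter_eq_nil_iff.2 (by simpa using hqt)] using hqt

theorem mem_lexPairs {p : ℕ} {ij : Fin p × Fin p} : ij ∈ lexPairs p ↔ ij.1 < ij.2 := by
  simp only [lexPairs, List.mem_flatMap, List.mem_map, List.mem_filter, List.mem_finRange,
    true_and, decide_eq_true_eq]
  constructor
  · rintro ⟨a, b, hab, rfl⟩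
    exact hab
  · exact fun h => ⟨ij.1, ij.2, h, rfl⟩

theorem pairwise_fst_le_lexPairs (p : ℕ) : (lexPairs p).Pairwise fun a b => a.1 ≤ b.1 := by
  refine List.pairwise_flatMap.2 ⟨fun a _ => ?_, (List.pairwise_lt_finRange p).imp ?_⟩
  · exact List.pairwise_map.2 (List.pairwise_of_forall fun _ _ => le_rfl)
  · intro a b hab x hx y hy
    obtain ⟨_, _, rfl⟩ := List.mem_map.1 hx
    obtain ⟨_, _, rfl⟩ := List.mem_map.1 hy
    exact hab.le

theorem givens_mulVec_single_of_ne {p : ℕ} {i j k : Fin p} (θ : ℝ) (hki : k ≠ i)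
    (hkj : k ≠ j) : givens p i j θ *ᵥ Pi.single k 1 = Pi.single k 1 := by
  ext a
  rw [mulVec_single_one, col_apply, givens, of_apply]
  split_ifs <;> simp_all

namespace Matrix

variable {n R : Type*} [Fintype n] [DecidableEq n] [Semiring R]

theorem list_prod_mulVec_eq_self {v : n → R} :
    ∀ {L : List (Matrix n n R)}, (∀ M ∈ L, M *ᵥ v = v) → L.prod *ᵥ v = v
  | [], _ => by simp
  | M :: L, hL => by
    rw [List.prod_cons, ← mulVec_mulVec,
      list_prod_mulVec_eq_self fun N hN => hL N (List.mem_cons_of_mem M hN),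
      hL M List.mem_cons_self]

theorem mul_apply_of_mulVec_single_eq {A B : Matrix n n R} {k : n}
    (hB : B *ᵥ Pi.single k 1 = Pi.single k 1) (i : n) : (A * B) i k = A i k := by
  rw [← col_apply (A * B), ← mulVec_single_one, ← mulVec_mulVec, hB, mulVec_single_one,
    col_apply]

end Matrix

theorem stmt_15_general {p d : ℕ} (θ : Fin p → Fin p → ℝ) :
    ∀ k : Fin p, (k : ℕ) < d → ∀ i : Fin p,
      (((lexPairs p).map fun ij => givens p ij.1 ij.2 (θ ij.1 ij.2)).prod) i k =
      ((((lexPairs p).filter fun ij => decide ((ij.1 : ℕ) < d)).map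
          fun ij => givens p ij.1 ij.2 (θ ij.1 ij.2)).prod) i k := by
  intro k hk i
  have hsplit := List.filter_append_filter_not_of_pairwise (q := fun ij : Fin p × Fin p =>
    decide ((ij.1 : ℕ) < d)) ((pairwise_fst_le_lexPairs p).imp fun hab hb => by
      simp only [decide_eq_true_eq, Fin.le_def] at hab hb ⊢; omega)
  conv_lhs => rw [← hsplit, List.map_append, List.prod_append]
  refine Matrix.mul_apply_of_mulVec_single_eq (Matrix.list_prod_mulVec_eq_self ?_) i
  intro M hM
  obtain ⟨ij, hij, rfl⟩ := List.mem_map.1 hM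
  obtain ⟨hmem, hge⟩ := List.mem_filter.1 hij
  have hlt : (ij.1 : ℕ) < ij.2 := mem_lexPairs.1 hmem
  simp only [Bool.not_eq_true', decide_eq_false_iff_not, not_lt] at hge
  exact givens_mulVec_single_of_ne _ (by rintro rfl; omega) (by rintro rfl; omega)

/-- The reduction (18)–(19) of Section 5: the first `d` columns of the full product
`∏_{1 ≤ i < j ≤ p} B_ij(θ_ij)` (in lexicographic order) coincide with the first `d` columns
of the partial product over the pairs with `i ≤ d` only; in particular they depend only on
the angles `θ_ij` with `i ≤ d`. -/
theorem stmt_15 {p d : ℕ} (hd1 : 1 ≤ d) (hdp : d < p) (θ : Fin p → Fin p → ℝ) :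
    ∀ k : Fin p, (k : ℕ) < d → ∀ i : Fin p,
      (((lexPairs p).map fun ij => givens p ij.1 ij.2 (θ ij.1 ij.2)).prod) i k =
      ((((lexPairs p).filter fun ij => decide ((ij.1 : ℕ) < d)).map
          fun ij => givens p ij.1 ij.2 (θ ij.1 ij.2)).prod) i k :=
  stmt_15_general θ
end

section
/- Let X : Ω → ℝᵖ be integrable, Y, Ỹ : Ω → ℝ measurable, with Ỹ independent of the pair (X, Y) and with the law of Ỹ equal to the law of Y. Let δ : ℝ → Fin k be measurable with c_j := P(δ∘Y = j) > 0 for every j, and define g : ℝ × ℝ → ℝ by g(y, ỹ) = 1{δ(y) = δ(ỹ)} / c_{δ(ỹ)}. Then E[ X g(Y, Ỹ) | σ(Ỹ) ] = Σ_{j} 1{δ(Ỹ) = j} · E[X·1{δ(Y)=j}] / c_j P-almost everywhere; that is, the conditional expectation E[X g(Y, Ỹ) | σ(Ỹ)] is almost everywhere equal to the sliced mean E[X | δ(Y) = δ(Ỹ)] evaluated at the slice of Ỹ. (The SIR case of Theorem 3.1: E[X|δ(Y)] has the same distribution as E[X g(Y, Ỹ)|Ỹ].) -/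
open MeasureTheory ProbabilityTheory

/-!
The integrand depends on `Ỹ` only through its slice `δ Ỹ`, so it splits as the finite sum over
slices `j` of `1{δ Ỹ = j} • Z_j` with `Z_j = 1{δ Y = j} • c_j⁻¹ • X`. The first factor is
`σ(Ỹ)`-measurable and pulls out of the conditional expectation, while `Z_j` is a function of
`(X, Y)`, which is independent of `Ỹ`, so its conditional expectation is its mean
`c_j⁻¹ • E[X · 1{δ Y = j}]`.
-/

section IndepFun

variable {Ω β γ E ι : Type*} [MeasurableSpace Ω] [MeasurableSpace β] [MeasurableSpace γ]
  [NormedAddCommGroup E] [NormedSpace ℝ E] [CompleteSpace E]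
  {μ : Measure Ω} [IsFiniteMeasure μ] {V : Ω → β} {W : Ω → γ}

theorem condExp_comap_indicator_preimage_of_indepFun (hV : Measurable V) (hW : Measurable W)
    (hindep : IndepFun V W μ) {f : γ → E} (hf : StronglyMeasurable f)
    (hfW : Integrable (f ∘ W) μ) {t : Set β} (ht : MeasurableSet t) :
    μ[(V ⁻¹' t).indicator (f ∘ W) | MeasurableSpace.comap V inferInstance] =ᵐ[μ]
      (V ⁻¹' t).indicator fun _ => μ[f ∘ W] := by
  have hfW_meas : StronglyMeasurable[MeasurableSpace.comap W inferInstance] (f ∘ W) :=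
    hf.comp_measurable (comap_measurable W)
  refine (condExp_indicator hfW (ht.preimage (comap_measurable V))).trans ?_
  filter_upwards [condExp_indep_eq hW.comap_le hV.comap_le hfW_meas hindep.symm] with ω hω
  simp only [Set.indicator, hω]

theorem condExp_comap_sum_indicator_preimage_of_indepFun [Fintype ι] (hV : Measurable V)
    (hW : Measurable W) (hindep : IndepFun V W μ) {f : ι → γ → E}
    (hf : ∀ i, StronglyMeasurable (f i)) (hfW : ∀ i, Integrable (f i ∘ W) μ) {t : ι → Set β}
    (ht : ∀ i, MeasurableSet (t i)) :
    μ[∑ i, (V ⁻¹' t i).indicator (f i ∘ W) | MeasurableSpace.comap V inferInstance] =ᵐ[μ]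
      ∑ i, (V ⁻¹' t i).indicator fun _ => μ[f i ∘ W] := by
  have hint : ∀ i ∈ Finset.univ, Integrable ((V ⁻¹' t i).indicator (f i ∘ W)) μ :=
    fun i _ => (hfW i).indicator (hV (ht i))
  refine (condExp_finsetSum hint _).trans ?_
  exact eventuallyEq_sum fun i _ =>
    condExp_comap_indicator_preimage_of_indepFun hV hW hindep (hf i) (hfW i) (ht i)

end IndepFun

theorem stmt_18_general {Ω : Type*} [MeasurableSpace Ω]
    (μ : Measure Ω) [IsProbabilityMeasure μ]
    {p k : ℕ} (X : Ω → (Fin p → ℝ)) (Y Ytil : Ω → ℝ)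
    (hX : Measurable X) (hY : Measurable Y) (hYtil : Measurable Ytil)
    (hXint : Integrable X μ)
    (hindep : IndepFun Ytil (fun ω => (X ω, Y ω)) μ)
    (δ : ℝ → Fin k) (hδ : Measurable δ)
    (c : Fin k → ℝ)
    (g : ℝ × ℝ → ℝ)
    (hg : ∀ y ytil : ℝ, g (y, ytil) = if δ y = δ ytil then (c (δ ytil))⁻¹ else 0) :
    μ[(fun ω => g (Y ω, Ytil ω) • X ω) | MeasurableSpace.comap Ytil inferInstance] =ᵐ[μ]
      fun ω => ∑ j : Fin k, (if δ (Ytil ω) = j then (1 : ℝ) else 0) •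
        (c j)⁻¹ • (∫ ω' in {ω' | δ (Y ω') = j}, X ω' ∂μ) := by
  classical
  have hδj : ∀ j, MeasurableSet (δ ⁻¹' {j}) := fun j => hδ (measurableSet_singleton j)
  have hA : ∀ j, MeasurableSet {ω | δ (Y ω) = j} := fun j => hY (hδj j)
  set Z : Fin k → (Fin p → ℝ) × ℝ → Fin p → ℝ :=
    fun j => (Prod.snd ⁻¹' (δ ⁻¹' {j})).indicator fun q => (c j)⁻¹ • q.1
  have hZ : ∀ j, StronglyMeasurable (Z j) := fun j =>
    (Measurable.indicator (by fun_prop) (measurable_snd (hδj j))).stronglyMeasurable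
  have hZXY : ∀ j, Z j ∘ (fun ω => (X ω, Y ω)) = {ω | δ (Y ω) = j}.indicator ((c j)⁻¹ • X) := by
    intro j; ext ω; simp [Z, Set.indicator_apply]
  have hZXY_int : ∀ j, Integrable (Z j ∘ fun ω => (X ω, Y ω)) μ := fun j => by
    rw [hZXY]; exact (hXint.smul _).indicator (hA j)
  have hsplit : (fun ω => g (Y ω, Ytil ω) • X ω) =
      ∑ j, (Ytil ⁻¹' (δ ⁻¹' {j})).indicator (Z j ∘ fun ω => (X ω, Y ω)) := by
    funext ω; rw [Finset.sum_apply]; simp [hg, hZXY, Set.indicator_apply, ite_smul]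
  rw [hsplit]
  filter_upwards [condExp_comap_sum_indicator_preimage_of_indepFun hYtil (hX.prodMk hY) hindep hZ
    hZXY_int hδj] with ω hω
  rw [hω, Finset.sum_apply]
  refine Finset.sum_congr rfl fun j _ => ?_
  rw [hZXY, integral_indicator (hA j)]
  simp [Set.indicator_apply, integral_smul]

/-- The SIR case of Theorem 3.1: with `Ỹ ⟂⟂ (X, Y)`, `Ỹ =ᵈ Y`, and
`g(y, ỹ) = 1{δ(y) = δ(ỹ)}/c_{δ(ỹ)}` where `c_j = P(δ(Y) = j) > 0`, the conditional
expectation `E[X g(Y, Ỹ) | σ(Ỹ)]` equals a.e. the sliced mean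
`Σ_j 1{δ(Ỹ) = j} E[X·1{δ(Y)=j}]/c_j`. -/
theorem stmt_18 {Ω : Type*} [MeasurableSpace Ω]
    (μ : Measure Ω) [IsProbabilityMeasure μ]
    {p k : ℕ} (X : Ω → (Fin p → ℝ)) (Y Ytil : Ω → ℝ)
    (hX : Measurable X) (hY : Measurable Y) (hYtil : Measurable Ytil)
    (hXint : Integrable X μ)
    (hindep : IndepFun Ytil (fun ω => (X ω, Y ω)) μ)
    (hlaw : Measure.map Ytil μ = Measure.map Y μ)
    (δ : ℝ → Fin k) (hδ : Measurable δ)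
    (c : Fin k → ℝ) (hc : ∀ j, c j = (μ {ω | δ (Y ω) = j}).toReal)
    (hpos : ∀ j : Fin k, 0 < c j)
    (g : ℝ × ℝ → ℝ)
    (hg : ∀ y ytil : ℝ, g (y, ytil) = if δ y = δ ytil then (c (δ ytil))⁻¹ else 0) :
    μ[(fun ω => g (Y ω, Ytil ω) • X ω) | MeasurableSpace.comap Ytil inferInstance] =ᵐ[μ]
      fun ω => ∑ j : Fin k, (if δ (Ytil ω) = j then (1 : ℝ) else 0) •
        (c j)⁻¹ • (∫ ω' in {ω' | δ (Y ω') = j}, X ω' ∂μ) :=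
  stmt_18_general μ X Y Ytil hX hY hYtil hXint hindep δ hδ c g hg
end
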